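/- arXiv:2105.03481 — 5 statements merged into one kernel-verified Lean document; each statement's English description precedes it below -/
import Mathlib

section
/- Let Z be a standard normal random variable on ℝ and let g : ℝ → ℝ be continuously differentiable with E|g'(Z)| < ∞ and E|Z g(Z)| < ∞. Then E[g'(Z) - Z g(Z)] = 0. -/
/-!
The Gaussian density `φ` of `N(μ, v)` satisfies `φ' = -((x - μ) / v) φ`, so
`(g φ)' = (g' - (x - μ) / v * g) φ`. On `ℝ`, the derivative of an integrable function with
integrable derivative has integral zero, and `g φ` is integrable since `|g|` is bounded near `μ`
and dominated by `|(x - μ) g|` away from it.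
-/

open MeasureTheory ProbabilityTheory Real
open scoped NNReal

lemma MeasureTheory.Integrable.of_sub_mul {ν : Measure ℝ} [IsFiniteMeasure ν] {g : ℝ → ℝ}
    (hg : Continuous g) (c : ℝ) (h : Integrable (fun x ↦ (x - c) * g x) ν) : Integrable g ν := by
  obtain ⟨M, hM⟩ := isCompact_Icc.exists_bound_of_continuousOn (s := Set.Icc (c - 1) (c + 1))
    hg.continuousOn
  refine ((integrable_const M).add h.norm).mono' hg.aestronglyMeasurable (ae_of_all _ fun x ↦ ?_)
  change ‖g x‖ ≤ M + ‖(x - c) * g x‖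
  rcases le_total |x - c| 1 with hx | hx
  · have := hM x (by rw [abs_sub_le_iff] at hx; constructor <;> linarith)
    have := norm_nonneg ((x - c) * g x)
    linarith
  · have : ‖g x‖ ≤ ‖(x - c) * g x‖ := by
      rw [norm_mul, Real.norm_eq_abs (x - c)]
      exact le_mul_of_one_le_left (norm_nonneg _) hx
    have := (norm_nonneg (g c)).trans (hM c ⟨by linarith, by linarith⟩)
    linarith

namespace ProbabilityTheory

lemma integrable_gaussianReal_iff {E : Type*} [NormedAddCommGroup E] [NormedSpace ℝ E]
    {μ : ℝ} {v : ℝ≥0} {f : ℝ → E} (hv : v ≠ 0) :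
    Integrable f (gaussianReal μ v) ↔ Integrable (fun x ↦ gaussianPDFReal μ v x • f x) := by
  simp [gaussianReal_of_var_ne_zero _ hv,
    integrable_withDensity_iff_integrable_smul' (measurable_gaussianPDF μ v)
      (ae_of_all _ fun _ ↦ gaussianPDF_lt_top)]

lemma hasDerivAt_gaussianPDFReal (μ : ℝ) (v : ℝ≥0) (x : ℝ) :
    HasDerivAt (gaussianPDFReal μ v) (-((x - μ) / v) * gaussianPDFReal μ v x) x := by
  have hexponent : HasDerivAt (fun y ↦ -(y - μ) ^ 2 / (2 * v)) (-((x - μ) / v)) x := by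
    have := (((hasDerivAt_id' x).sub_const μ).pow 2).neg.div_const (2 * (v : ℝ))
    exact this.congr_deriv (by ring)
  exact (hexponent.exp.const_mul (√(2 * π * v))⁻¹).congr_deriv (by rw [gaussianPDFReal]; ring)

theorem integral_deriv_sub_mul_gaussianReal {μ : ℝ} {v : ℝ≥0} (hv : v ≠ 0) {g : ℝ → ℝ}
    (hg : Differentiable ℝ g) (hg' : Integrable (deriv g) (gaussianReal μ v))
    (hxg : Integrable (fun x ↦ (x - μ) * g x) (gaussianReal μ v)) :
    ∫ x, (deriv g x - (x - μ) / v * g x) ∂gaussianReal μ v = 0 := by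
  have hderiv (x : ℝ) : HasDerivAt (fun y ↦ g y * gaussianPDFReal μ v y)
      ((deriv g x - (x - μ) / v * g x) * gaussianPDFReal μ v x) x :=
    ((hg x).hasDerivAt.mul (hasDerivAt_gaussianPDFReal μ v x)).congr_deriv (by ring)
  have hint : Integrable (fun x ↦ deriv g x - (x - μ) / v * g x) (gaussianReal μ v) :=
    hg'.sub ((hxg.div_const (v : ℝ)).congr (ae_of_all _ fun x ↦ by ring))
  have hgφ : Integrable (fun x ↦ g x * gaussianPDFReal μ v x) := by
    simpa only [smul_eq_mul, mul_comm] using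
      (integrable_gaussianReal_iff hv).mp (hxg.of_sub_mul hg.continuous μ)
  rw [integral_gaussianReal_eq_integral_smul hv]
  simp_rw [smul_eq_mul, mul_comm (gaussianPDFReal μ v _)]
  refine integral_eq_zero_of_hasDerivAt_of_integrable hderiv ?_ hgφ
  simpa only [smul_eq_mul, mul_comm] using (integrable_gaussianReal_iff hv).mp hint

end ProbabilityTheory

/-- Stein identity for the standard normal distribution on ℝ. -/
theorem stein_identity_standard_normal
    (g : ℝ → ℝ) (hg : ContDiff ℝ 1 g)
    (hint1 : Integrable (fun x => deriv g x) (gaussianReal 0 1))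
    (hint2 : Integrable (fun x => x * g x) (gaussianReal 0 1)) :
    ∫ x, (deriv g x - x * g x) ∂(gaussianReal 0 1) = 0 := by
  simpa using integral_deriv_sub_mul_gaussianReal one_ne_zero (hg.differentiable one_ne_zero)
    hint1 (by simpa using hint2)
end

section
/- Let P be the exponential distribution with rate λ > 0 and let g₀ : [0,∞) → ℝ be continuously differentiable with x g₀(x) e^{-λx} → 0 as x → ∞ and such that x ↦ x g₀'(x) + (1 - λx) g₀(x) is integrable against P. Then E_{X∼Exp(λ)}[X g₀'(X) + (1 - λX) g₀(X)] = 0. -/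
open MeasureTheory Real Set Filter

/- The integrand is the derivative of `x ↦ l x g₀(x) e^{-lx}`, which vanishes at `0` because of
the factor `x` and tends to `0` at infinity by assumption; the fundamental theorem of calculus on
`[0, ∞)` then gives the identity. -/

theorem hasDerivAt_mul_mul_exp_neg_mul {g : ℝ → ℝ} {g' x : ℝ} (l : ℝ) (hg : HasDerivAt g g' x) :
    HasDerivAt (fun y => y * g y * exp (-l * y))
      ((x * g' + (1 - l * x) * g x) * exp (-l * x)) x := by
  have hexp : HasDerivAt (fun y => exp (-l * y)) (exp (-l * x) * -l) x := by
    simpa using ((hasDerivAt_id x).const_mul (-l)).exp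
  exact (((hasDerivAt_id' x).mul hg).mul hexp).congr_deriv (by simp only [Pi.mul_apply]; ring)

theorem stein_identity_exponential_T1_general
    (l : ℝ) (g₀ : ℝ → ℝ)
    (hg : ContDiffOn ℝ 1 g₀ (Ici 0))
    (hlim : Tendsto (fun x => x * g₀ x * exp (-l * x)) atTop (nhds 0))
    (hint : IntegrableOn
      (fun x => (x * deriv g₀ x + (1 - l * x) * g₀ x) * (l * exp (-l * x))) (Ici 0)) :
    ∫ x in Ici 0, (x * deriv g₀ x + (1 - l * x) * g₀ x) * (l * exp (-l * x)) = 0 := by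
  have hderiv : ∀ x ∈ Ioi (0 : ℝ), HasDerivAt (fun y => l * (y * g₀ y * exp (-l * y)))
      ((x * deriv g₀ x + (1 - l * x) * g₀ x) * (l * exp (-l * x))) x := by
    intro x hx
    have hg₀ : HasDerivAt g₀ (deriv g₀ x) x :=
      ((hg.contDiffAt (Ici_mem_nhds hx)).differentiableAt one_ne_zero).hasDerivAt
    exact ((hasDerivAt_mul_mul_exp_neg_mul l hg₀).const_mul l).congr_deriv (by ring)
  have hcont : ContinuousWithinAt (fun y => l * (y * g₀ y * exp (-l * y))) (Ici 0) 0 := by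
    have hg₀ : ContinuousWithinAt g₀ (Ici 0) 0 := hg.continuousOn 0 self_mem_Ici
    exact continuousWithinAt_const.mul ((continuousWithinAt_id.mul hg₀).mul
      (continuous_exp.comp (continuous_const.mul continuous_id)).continuousWithinAt)
  rw [integral_Ici_eq_integral_Ioi, integral_Ioi_of_hasDerivAt_of_tendsto hcont hderiv
    (hint.mono_set Ioi_subset_Ici_self) (by simpa using hlim.const_mul l)]
  simp

/-- Stein identity for the operator `(T₁ g₀)(x) = x g₀'(x) + (1 - λx) g₀(x)` under the
exponential distribution with rate `l > 0`, requiring no boundary condition at `0`. -/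
theorem stein_identity_exponential_T1
    (l : ℝ) (hl : 0 < l) (g₀ : ℝ → ℝ)
    (hg : ContDiffOn ℝ 1 g₀ (Ici 0))
    (hlim : Tendsto (fun x => x * g₀ x * exp (-l * x)) atTop (nhds 0))
    (hint : IntegrableOn
      (fun x => (x * deriv g₀ x + (1 - l * x) * g₀ x) * (l * exp (-l * x))) (Ici 0)) :
    ∫ x in Ici 0, (x * deriv g₀ x + (1 - l * x) * g₀ x) * (l * exp (-l * x)) = 0 :=
  stein_identity_exponential_T1_general l g₀ hg hlim hint
end

section
/- Let p and q be positive C¹ probability densities on ℝ^d, with associated measures P and Q, and let g : ℝ^d → ℝ^d be a C¹ vector field. Assume all integrals below are finite and that ∫ ⟨∇, q(x) g(x)⟩ dx = 0 (boundary terms vanish). Then E_{X∼Q}[⟨∇ log p(X), g(X)⟩ + ⟨∇, g(X)⟩] = E_{X∼Q}[⟨∇ log p(X) - ∇ log q(X), g(X)⟩]. -/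
/-! The two integrands differ by `q (⟨∇ log q, g⟩ + div g) = div (q g)`, because
`q ∇ log q = ∇ q`; the integral of `div (q g)` vanishes by assumption. -/

open MeasureTheory Real Finset

theorem EuclideanSpace.gradient_apply {ι : Type*} [Fintype ι] [DecidableEq ι]
    (f : EuclideanSpace ℝ ι → ℝ) (x : EuclideanSpace ℝ ι) (i : ι) :
    gradient f x i = fderiv ℝ f x (EuclideanSpace.single i 1) := by
  rw [gradient, ← InnerProductSpace.toDual_symm_apply, real_inner_comm,
    EuclideanSpace.inner_single_left]
  simp

theorem mul_fderiv_log_apply {E : Type*} [NormedAddCommGroup E] [NormedSpace ℝ E]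
    {f : E → ℝ} {x : E} (hf : DifferentiableAt ℝ f x) (hx : f x ≠ 0) (v : E) :
    f x * fderiv ℝ (fun z => log (f z)) x v = fderiv ℝ f x v := by
  rw [fderiv.log hf hx]
  simp [hx]

theorem fderiv_mul_apply_eq_fderiv_log_mul_add {E : Type*} [NormedAddCommGroup E]
    [NormedSpace ℝ E] {q h : E → ℝ} {x : E} (hq : DifferentiableAt ℝ q x) (hx : q x ≠ 0)
    (hh : DifferentiableAt ℝ h x) (v : E) :
    fderiv ℝ (fun y => q y * h y) x v
      = (fderiv ℝ (fun z => log (q z)) x v * h x + fderiv ℝ h x v) * q x := by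
  rw [fderiv_fun_mul hq hh]
  simp only [add_apply, smul_apply, smul_eq_mul]
  rw [← mul_fderiv_log_apply hq hx]
  ring

theorem div_mul_eq_score_inner_add_div {ι : Type*} [Fintype ι] [DecidableEq ι]
    {q : EuclideanSpace ℝ ι → ℝ} {g : EuclideanSpace ℝ ι → EuclideanSpace ℝ ι}
    {x : EuclideanSpace ℝ ι} (hq : DifferentiableAt ℝ q x) (hx : q x ≠ 0)
    (hg : DifferentiableAt ℝ g x) :
    ∑ i, fderiv ℝ (fun y => q y * g y i) x (EuclideanSpace.single i 1)
      = ((∑ i, gradient (fun z => log (q z)) x i * g x i)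
          + ∑ i, fderiv ℝ (fun y => g y i) x (EuclideanSpace.single i 1)) * q x := by
  have hgi : ∀ i, DifferentiableAt ℝ (fun y => g y i) x := fun i =>
    (EuclideanSpace.proj (𝕜 := ℝ) i).differentiableAt.comp x hg
  simp only [fderiv_mul_apply_eq_fderiv_log_mul_add hq hx (hgi _), EuclideanSpace.gradient_apply,
    add_mul, sum_add_distrib, sum_mul]

theorem langevin_stein_operator_score_difference_general
    (d : ℕ) (p q : EuclideanSpace ℝ (Fin d) → ℝ)
    (hq_pos : ∀ x, 0 < q x)
    (hq_smooth : ContDiff ℝ 1 q)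
    (g : EuclideanSpace ℝ (Fin d) → EuclideanSpace ℝ (Fin d))
    (hg : ContDiff ℝ 1 g)
    (hint1 : Integrable (fun x =>
      ((∑ i, gradient (fun z => Real.log (p z)) x i * g x i)
        + ∑ i, fderiv ℝ (fun y => g y i) x (EuclideanSpace.single i (1 : ℝ))) * q x))
    (hint2 : Integrable (fun x =>
      (∑ i, (gradient (fun z => Real.log (p z)) x i
        - gradient (fun z => Real.log (q z)) x i) * g x i) * q x))
    (hdiv : ∫ x, ∑ i,
      fderiv ℝ (fun y => q y * g y i) x (EuclideanSpace.single i (1 : ℝ)) = 0) :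
    ∫ x, ((∑ i, gradient (fun z => Real.log (p z)) x i * g x i)
        + ∑ i, fderiv ℝ (fun y => g y i) x (EuclideanSpace.single i (1 : ℝ))) * q x
    = ∫ x, (∑ i, (gradient (fun z => Real.log (p z)) x i
        - gradient (fun z => Real.log (q z)) x i) * g x i) * q x := by
  rw [← sub_eq_zero, ← integral_sub hint1 hint2, ← hdiv]
  refine integral_congr_ae (ae_of_all _ fun x => ?_)
  dsimp only
  rw [div_mul_eq_score_inner_add_div (hq_smooth.differentiable one_ne_zero x) (hq_pos x).ne'
    (hg.differentiable one_ne_zero x)]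
  simp only [sub_mul, sum_sub_distrib]
  ring

/-- The expectation under `Q` (density `q`) of the Langevin Stein operator for `P`
(density `p`) equals the expected inner product of the score difference with `g`. -/
theorem langevin_stein_operator_score_difference
    (d : ℕ) (p q : EuclideanSpace ℝ (Fin d) → ℝ)
    (hp_pos : ∀ x, 0 < p x) (hq_pos : ∀ x, 0 < q x)
    (hp_smooth : ContDiff ℝ 1 p) (hq_smooth : ContDiff ℝ 1 q)
    (hp_prob : ∫ x, p x = 1) (hq_prob : ∫ x, q x = 1)
    (g : EuclideanSpace ℝ (Fin d) → EuclideanSpace ℝ (Fin d))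
    (hg : ContDiff ℝ 1 g)
    (hint1 : Integrable (fun x =>
      ((∑ i, gradient (fun z => Real.log (p z)) x i * g x i)
        + ∑ i, fderiv ℝ (fun y => g y i) x (EuclideanSpace.single i (1 : ℝ))) * q x))
    (hint2 : Integrable (fun x =>
      (∑ i, (gradient (fun z => Real.log (p z)) x i
        - gradient (fun z => Real.log (q z)) x i) * g x i) * q x))
    (hdiv : ∫ x, ∑ i,
      fderiv ℝ (fun y => q y * g y i) x (EuclideanSpace.single i (1 : ℝ)) = 0) :
    ∫ x, ((∑ i, gradient (fun z => Real.log (p z)) x i * g x i)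
        + ∑ i, fderiv ℝ (fun y => g y i) x (EuclideanSpace.single i (1 : ℝ))) * q x
    = ∫ x, (∑ i, (gradient (fun z => Real.log (p z)) x i
        - gradient (fun z => Real.log (q z)) x i) * g x i) * q x :=
  langevin_stein_operator_score_difference_general d p q hq_pos hq_smooth g hg hint1 hint2 hdiv
end

section
/- Let p be a positive C¹ density on ℝ. Suppose Q is a probability measure on ℝ with C¹ positive density q such that for all C¹ functions g : ℝ → ℝ with compact support, E_{X∼Q}[(log p)'(X) g(X) + g'(X)] = 0. Then (log q)' = (log p)' everywhere, and hence q = c·p for some constant c > 0; if also ∫q = ∫p = 1, then q = p. -/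
open MeasureTheory Real
open scoped ContDiff

/-! Integrating by parts against a compactly supported test function `g`, the Stein
expectation `∫ (s g + g') q` with `s = (log p)'` equals `∫ g (s q - q')`. Its vanishing for all
test functions forces the continuous function `s q - q'` to vanish, i.e.
`(log q)' = q' / q = s = (log p)'`. Hence `log q - log p` is a constant `a`, so `q = exp a • p`,
and the normalisations give `exp a = 1`. -/

theorem integral_deriv_mul_eq_neg_integral_mul_deriv {f g : ℝ → ℝ} (hf : ContDiff ℝ 1 f)
    (hg : ContDiff ℝ 1 g) (hg_supp : HasCompactSupport g) :
    ∫ x, deriv g x * f x = -∫ x, g x * deriv f x := by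
  have hf' := hf.continuous_deriv le_rfl
  have hg' := hg.continuous_deriv le_rfl
  simp only [mul_comm (deriv g _), mul_comm (g _)]
  exact integral_mul_deriv_eq_deriv_mul_of_integrable
    (fun x _ ↦ (hf.differentiable one_ne_zero x).hasDerivAt)
    (fun x _ ↦ (hg.differentiable one_ne_zero x).hasDerivAt)
    ((hf.continuous.mul hg').integrable_of_hasCompactSupport hg_supp.deriv.mul_left)
    ((hf'.mul hg.continuous).integrable_of_hasCompactSupport hg_supp.mul_left)
    ((hf.continuous.mul hg.continuous).integrable_of_hasCompactSupport hg_supp.mul_left)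

theorem integral_stein_eq_integral_smul {s f g : ℝ → ℝ} (hs : Continuous s)
    (hf : ContDiff ℝ 1 f) (hg : ContDiff ℝ 1 g) (hg_supp : HasCompactSupport g) :
    ∫ x, (s x * g x + deriv g x) * f x = ∫ x, g x • (s x * f x - deriv f x) := by
  have hsgf : Integrable fun x ↦ s x * g x * f x :=
    ((hs.mul hg.continuous).mul hf.continuous).integrable_of_hasCompactSupport
      hg_supp.mul_left.mul_right
  have hg'f : Integrable fun x ↦ deriv g x * f x :=
    ((hg.continuous_deriv le_rfl).mul hf.continuous).integrable_of_hasCompactSupport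
      hg_supp.deriv.mul_right
  have hgf' : Integrable fun x ↦ g x * deriv f x :=
    (hg.continuous.mul (hf.continuous_deriv le_rfl)).integrable_of_hasCompactSupport
      hg_supp.mul_right
  calc ∫ x, (s x * g x + deriv g x) * f x
      = (∫ x, s x * g x * f x) + ∫ x, deriv g x * f x := by
        simp only [add_mul]; exact integral_add hsgf hg'f
    _ = (∫ x, s x * g x * f x) - ∫ x, g x * deriv f x := by
        rw [integral_deriv_mul_eq_neg_integral_mul_deriv hf hg hg_supp, sub_eq_add_neg]
    _ = ∫ x, g x • (s x * f x - deriv f x) := by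
        rw [← integral_sub hsgf hgf']
        congr 1 with x
        rw [smul_eq_mul]; ring

theorem deriv_eq_mul_of_forall_integral_stein_eq_zero {s f : ℝ → ℝ} (hs : Continuous s)
    (hf : ContDiff ℝ 1 f)
    (hStein : ∀ g : ℝ → ℝ, ContDiff ℝ ∞ g → HasCompactSupport g →
      ∫ x, (s x * g x + deriv g x) * f x = 0) (x : ℝ) :
    deriv f x = s x * f x := by
  have hF : Continuous fun x ↦ s x * f x - deriv f x :=
    (hs.mul hf.continuous).sub (hf.continuous_deriv le_rfl)
  have hF_ae : ∀ᵐ x, s x * f x - deriv f x = 0 :=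
    ae_eq_zero_of_integral_contDiff_smul_eq_zero hF.locallyIntegrable fun g hg hg_supp ↦ by
      rw [← integral_stein_eq_integral_smul hs hf (hg.of_le (by norm_num)) hg_supp]
      exact hStein g hg hg_supp
  have hF_zero := (hF.ae_eq_iff_eq volume continuous_zero).mp hF_ae
  exact (sub_eq_zero.mp (congrFun hF_zero x)).symm

theorem exists_pos_const_mul_of_deriv_log_eq {p q : ℝ → ℝ} (hp : Differentiable ℝ p)
    (hq : Differentiable ℝ q) (hp_pos : ∀ x, 0 < p x) (hq_pos : ∀ x, 0 < q x)
    (h : ∀ x, deriv (fun y ↦ log (q y)) x = deriv (fun y ↦ log (p y)) x) :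
    ∃ c, 0 < c ∧ ∀ x, q x = c * p x := by
  have hlog {f : ℝ → ℝ} (hf : Differentiable ℝ f) (hf_pos : ∀ x, 0 < f x) :
      Differentiable ℝ fun y ↦ log (f y) := hf.log fun x ↦ (hf_pos x).ne'
  obtain ⟨a, ha⟩ := isOpen_univ.exists_eq_add_of_deriv_eq isPreconnected_univ
    (hlog hq hq_pos).differentiableOn (hlog hp hp_pos).differentiableOn fun x _ ↦ h x
  refine ⟨exp a, exp_pos a, fun x ↦ ?_⟩
  have hx : log (q x) = log (p x) + a := ha (Set.mem_univ x)
  rw [← exp_log (hq_pos x), ← exp_log (hp_pos x), hx, exp_add, mul_comm]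

/-- One-dimensional Stein characterization via the Langevin operator: if the Langevin
Stein identity for `p` holds under `Q` (density `q`) for all compactly supported `C¹`
test functions, then the score functions agree, `q` is proportional to `p`, and since
both integrate to one, `q = p`. -/
theorem langevin_stein_characterization_one_dim
    (p q : ℝ → ℝ)
    (hp_pos : ∀ x, 0 < p x) (hq_pos : ∀ x, 0 < q x)
    (hp_smooth : ContDiff ℝ 1 p) (hq_smooth : ContDiff ℝ 1 q)
    (hp_prob : ∫ x, p x = 1) (hq_prob : ∫ x, q x = 1)
    (hStein : ∀ g : ℝ → ℝ, ContDiff ℝ 1 g → HasCompactSupport g →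
      ∫ x, (deriv (fun y => Real.log (p y)) x * g x + deriv g x) * q x = 0) :
    (∀ x, deriv (fun y => Real.log (q y)) x = deriv (fun y => Real.log (p y)) x)
    ∧ (∃ c : ℝ, 0 < c ∧ ∀ x, q x = c * p x)
    ∧ q = p := by
  have hp_diff := hp_smooth.differentiable one_ne_zero
  have hq_diff := hq_smooth.differentiable one_ne_zero
  have hscore_p : deriv (fun y ↦ log (p y)) = fun x ↦ deriv p x / p x :=
    funext fun x ↦ deriv.log (hp_diff x) (hp_pos x).ne'
  have hscore_p_cont : Continuous (deriv fun y ↦ log (p y)) := by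
    rw [hscore_p]
    exact (hp_smooth.continuous_deriv le_rfl).div hp_diff.continuous fun x ↦ (hp_pos x).ne'
  have hq' := deriv_eq_mul_of_forall_integral_stein_eq_zero hscore_p_cont hq_smooth
    fun g hg hg_supp ↦ hStein g (hg.of_le (by norm_num)) hg_supp
  have hscore (x : ℝ) : deriv (fun y ↦ log (q y)) x = deriv (fun y ↦ log (p y)) x := by
    rw [deriv.log (hq_diff x) (hq_pos x).ne', hq' x, mul_div_cancel_right₀ _ (hq_pos x).ne']
  obtain ⟨c, hc_pos, hqc⟩ :=
    exists_pos_const_mul_of_deriv_log_eq hp_diff hq_diff hp_pos hq_pos hscore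
  have hc : c = 1 :=
    calc c = c * ∫ x, p x := by rw [hp_prob, mul_one]
      _ = ∫ x, q x := by rw [← integral_const_mul, funext hqc]
      _ = 1 := hq_prob
  exact ⟨hscore, ⟨c, hc_pos, hqc⟩, funext fun x ↦ by rw [hqc x, hc, one_mul]⟩
end

section
/- Let p be a positive C¹ probability density on ℝ and H a reproducing kernel Hilbert space of C¹ functions on ℝ with reproducing kernel k that is C¹ in each argument, such that for g ∈ H, g'(x) = ⟨∂₁k(x,·), g⟩_H. Let Q be a probability measure with E_{X∼Q}[‖(log p)'(X) k(X,·) + ∂₁k(X,·)‖_H] < ∞. Then sup_{g∈H, ‖g‖_H≤1} E_{X∼Q}[(log p)'(X) g(X) + g'(X)] = ‖E_{X∼Q}[(log p)'(X) k(X,·) + ∂₁k(X,·)]‖_H. -/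
open MeasureTheory Real
open scoped InnerProductSpace

/-! By the reproducing properties the Stein integrand at `g` is `⟪g, ξ x⟫` with
`ξ x = (log p)'(x) • K x + K' x`, so Bochner integration of the integrable `ξ` turns the
expectation into `⟪∫ ξ ∂Q, g⟫`. Over the unit ball this is at most `‖∫ ξ ∂Q‖` by
Cauchy–Schwarz, with equality at the normalised mean embedding. -/

theorem real_inner_le_norm_of_norm_le_one {H : Type*} [NormedAddCommGroup H]
    [InnerProductSpace ℝ H] (ξ : H) {g : H} (hg : ‖g‖ ≤ 1) : ⟪ξ, g⟫_ℝ ≤ ‖ξ‖ :=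
  calc ⟪ξ, g⟫_ℝ ≤ ‖ξ‖ * ‖g‖ := real_inner_le_norm ξ g
    _ ≤ ‖ξ‖ := mul_le_of_le_one_right (norm_nonneg ξ) hg

theorem iSup_real_inner_unitBall_eq_norm {H : Type*} [NormedAddCommGroup H]
    [InnerProductSpace ℝ H] (ξ : H) :
    ⨆ g : {g : H // ‖g‖ ≤ 1}, ⟪ξ, (g : H)⟫_ℝ = ‖ξ‖ := by
  have hunit : ‖‖ξ‖⁻¹ • ξ‖ ≤ 1 := by
    rw [norm_smul, norm_inv, norm_norm]
    exact inv_mul_le_one_of_le₀ le_rfl (norm_nonneg ξ)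
  -- Also valid for `ξ = 0`, where `‖ξ‖⁻¹ • ξ = 0` because `0⁻¹ = 0`.
  have hattain : ⟪ξ, ‖ξ‖⁻¹ • ξ⟫_ℝ = ‖ξ‖ := by
    rw [real_inner_smul_right, real_inner_self_eq_norm_sq, sq, ← mul_assoc]
    rcases eq_or_ne ‖ξ‖ 0 with h | h
    · simp [h]
    · rw [inv_mul_cancel₀ h, one_mul]
  have hbdd : BddAbove (Set.range fun g : {g : H // ‖g‖ ≤ 1} => ⟪ξ, (g : H)⟫_ℝ) :=
    ⟨‖ξ‖, Set.forall_mem_range.2 fun g => real_inner_le_norm_of_norm_le_one ξ g.2⟩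
  have : Nonempty {g : H // ‖g‖ ≤ 1} := ⟨⟨0, by simp⟩⟩
  refine le_antisymm (ciSup_le fun g => real_inner_le_norm_of_norm_le_one ξ g.2) ?_
  exact hattain ▸ le_ciSup hbdd ⟨‖ξ‖⁻¹ • ξ, hunit⟩

theorem ksd_closed_form_one_dim_general
    (p : ℝ → ℝ)
    (H : Type*) [NormedAddCommGroup H] [InnerProductSpace ℝ H] [CompleteSpace H]
    (Φ : H →ₗ[ℝ] (ℝ → ℝ))  -- inclusion of `H` as a space of functions on ℝ
    (K K' : ℝ → H)         -- kernel sections `k(x,·)` and their derivatives `∂₁k(x,·)`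
    (hrep : ∀ (g : H) (x : ℝ), Φ g x = (inner ℝ (K x) g : ℝ))
    (hrep' : ∀ (g : H) (x : ℝ), deriv (Φ g) x = (inner ℝ (K' x) g : ℝ))
    (Q : Measure ℝ)
    (hint : Integrable
      (fun x => (deriv (fun y => Real.log (p y)) x) • K x + K' x) Q) :
    (⨆ g : {g : H // ‖g‖ ≤ 1},
        ∫ x, (deriv (fun y => Real.log (p y)) x * Φ (g : H) x + deriv (Φ (g : H)) x) ∂Q)
      = ‖∫ x, ((deriv (fun y => Real.log (p y)) x) • K x + K' x) ∂Q‖ := by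
  set ξ := ∫ x, ((deriv (fun y => Real.log (p y)) x) • K x + K' x) ∂Q
  have hstein : ∀ g : H,
      ∫ x, (deriv (fun y => Real.log (p y)) x * Φ g x + deriv (Φ g) x) ∂Q = ⟪ξ, g⟫_ℝ := by
    intro g
    have hpointwise : ∀ x, deriv (fun y => Real.log (p y)) x * Φ g x + deriv (Φ g) x
        = ⟪g, deriv (fun y => Real.log (p y)) x • K x + K' x⟫_ℝ := fun x => by
      rw [hrep, hrep', real_inner_comm, inner_add_right, real_inner_smul_right,
        real_inner_comm (K' x)]
    simp_rw [hpointwise]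
    rw [integral_inner hint, real_inner_comm]
  simp_rw [hstein]
  exact iSup_real_inner_unitBall_eq_norm ξ

/-- Closed form of the one-dimensional kernel Stein discrepancy: the supremum of the
expected Langevin Stein operator over the unit ball of the RKHS `H` equals the `H`-norm
of the mean embedding `ξ_Q = E_Q[(log p)'(X) k(X,·) + ∂₁k(X,·)]`. -/
theorem ksd_closed_form_one_dim
    (p : ℝ → ℝ) (hp_pos : ∀ x, 0 < p x) (hp_smooth : ContDiff ℝ 1 p)
    (hp_prob : ∫ x, p x = 1)
    (H : Type*) [NormedAddCommGroup H] [InnerProductSpace ℝ H] [CompleteSpace H]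
    (Φ : H →ₗ[ℝ] (ℝ → ℝ))  -- inclusion of `H` as a space of functions on ℝ
    (K K' : ℝ → H)         -- kernel sections `k(x,·)` and their derivatives `∂₁k(x,·)`
    (hΦ_smooth : ∀ g : H, ContDiff ℝ 1 (Φ g))
    (hrep : ∀ (g : H) (x : ℝ), Φ g x = (inner ℝ (K x) g : ℝ))
    (hrep' : ∀ (g : H) (x : ℝ), deriv (Φ g) x = (inner ℝ (K' x) g : ℝ))
    (Q : Measure ℝ) [IsProbabilityMeasure Q]
    (hint : Integrable
      (fun x => (deriv (fun y => Real.log (p y)) x) • K x + K' x) Q) :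
    (⨆ g : {g : H // ‖g‖ ≤ 1},
        ∫ x, (deriv (fun y => Real.log (p y)) x * Φ (g : H) x + deriv (Φ (g : H)) x) ∂Q)
      = ‖∫ x, ((deriv (fun y => Real.log (p y)) x) • K x + K' x) ∂Q‖ :=
  ksd_closed_form_one_dim_general p H Φ K K' hrep hrep' Q hint
end
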